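/- arXiv:2509.25677 — 4 statements merged into one kernel-verified Lean document; each statement's English description precedes it below -/
import Mathlib

section
/- Let N ≥ 1, let f, g : ℝ^N → ℝ be differentiable at a point x with f(x)² + g(x)² > 0, and set h(y) := √((f(y)² + g(y)²)/2). Then h is differentiable at x and ‖∇h(x)‖² ≤ (1/2)(‖∇f(x)‖² + ‖∇g(x)‖²), where ∇ denotes the gradient. -/
/-! The derivative of `h` is `(f x • f' + g x • g') / (2 h x)` and `(2 h x)² = 2 (f x² + g x²)`,
so the bound is Cauchy–Schwarz for the pairs `(f x, g x)` and `(‖f'‖, ‖g'‖)`. -/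

open InnerProductSpace

theorem norm_gradient_eq_norm_fderiv {𝕜 F : Type*} [RCLike 𝕜] [NormedAddCommGroup F]
    [InnerProductSpace 𝕜 F] [CompleteSpace F] (f : F → 𝕜) (x : F) :
    ‖gradient f x‖ = ‖fderiv 𝕜 f x‖ :=
  (toDual 𝕜 F).symm.norm_map _

section Normed

variable {V : Type*} [SeminormedAddCommGroup V] [NormedSpace ℝ V]

theorem norm_smul_add_smul_sq_le (a b : ℝ) (u v : V) :
    ‖a • u + b • v‖ ^ 2 ≤ (a ^ 2 + b ^ 2) * (‖u‖ ^ 2 + ‖v‖ ^ 2) := by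
  have htri : ‖a • u + b • v‖ ≤ |a| * ‖u‖ + |b| * ‖v‖ := by
    simpa only [norm_smul, Real.norm_eq_abs] using norm_add_le (a • u) (b • v)
  calc ‖a • u + b • v‖ ^ 2 ≤ (|a| * ‖u‖ + |b| * ‖v‖) ^ 2 := by gcongr
    _ ≤ (a ^ 2 + b ^ 2) * (‖u‖ ^ 2 + ‖v‖ ^ 2) := by
      nlinarith [sq_nonneg (|a| * ‖v‖ - |b| * ‖u‖), sq_abs a, sq_abs b]

theorem norm_smul_add_smul_div_sqrt_mean_sq_sq_le {a b : ℝ} (hab : 0 < a ^ 2 + b ^ 2) (u v : V) :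
    ‖(1 / (2 * √((a ^ 2 + b ^ 2) / 2))) • (a • u + b • v)‖ ^ 2 ≤
      1 / 2 * (‖u‖ ^ 2 + ‖v‖ ^ 2) := by
  have hscale : (1 / (2 * √((a ^ 2 + b ^ 2) / 2))) ^ 2 = 1 / (2 * (a ^ 2 + b ^ 2)) := by
    rw [div_pow, mul_pow, Real.sq_sqrt (by positivity)]
    ring
  rw [norm_smul, mul_pow, Real.norm_eq_abs, sq_abs, hscale, one_div_mul_eq_div,
    div_le_iff₀ (by positivity)]
  calc ‖a • u + b • v‖ ^ 2 ≤ (a ^ 2 + b ^ 2) * (‖u‖ ^ 2 + ‖v‖ ^ 2) :=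
        norm_smul_add_smul_sq_le a b u v
    _ = 1 / 2 * (‖u‖ ^ 2 + ‖v‖ ^ 2) * (2 * (a ^ 2 + b ^ 2)) := by ring

end Normed

theorem HasFDerivAt.mean_sq {E : Type*} [NormedAddCommGroup E] [NormedSpace ℝ E]
    {f g : E → ℝ} {f' g' : StrongDual ℝ E} {x : E}
    (hf : HasFDerivAt f f' x) (hg : HasFDerivAt g g' x) :
    HasFDerivAt (fun y => (f y ^ 2 + g y ^ 2) / 2) (f x • f' + g x • g') x := by
  refine ((((hf.pow 2).add (hg.pow 2)).mul_const (1 / 2 : ℝ)).congr_fderiv ?_)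
    |>.congr_of_eventuallyEq (.of_forall fun y => ?_)
  · ext v
    simp only [add_apply, smul_apply, smul_eq_mul, nsmul_eq_mul]
    ring
  · simp only [Pi.add_apply]
    ring

theorem gradient_sqrt_mean_square_le_general (N : ℕ)
    (f g : EuclideanSpace ℝ (Fin N) → ℝ) (x : EuclideanSpace ℝ (Fin N))
    (hf : DifferentiableAt ℝ f x) (hg : DifferentiableAt ℝ g x)
    (hpos : 0 < f x ^ 2 + g x ^ 2) :
    DifferentiableAt ℝ (fun y => Real.sqrt ((f y ^ 2 + g y ^ 2) / 2)) x ∧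
      ‖gradient (fun y => Real.sqrt ((f y ^ 2 + g y ^ 2) / 2)) x‖ ^ 2 ≤
        (1 / 2) * (‖gradient f x‖ ^ 2 + ‖gradient g x‖ ^ 2) := by
  have hsqrt := (hf.hasFDerivAt.mean_sq hg.hasFDerivAt).sqrt (by positivity)
  refine ⟨hsqrt.differentiableAt, ?_⟩
  simp only [norm_gradient_eq_norm_fderiv, hsqrt.fderiv]
  exact norm_smul_add_smul_div_sqrt_mean_sq_sq_le hpos _ _

/-- If `f, g : ℝ^N → ℝ` are differentiable at `x` with `f(x)² + g(x)² > 0`, and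
`h(y) := √((f(y)² + g(y)²)/2)`, then `h` is differentiable at `x` and
`‖∇h(x)‖² ≤ ½(‖∇f(x)‖² + ‖∇g(x)‖²)`. -/
theorem gradient_sqrt_mean_square_le (N : ℕ) (hN : 1 ≤ N)
    (f g : EuclideanSpace ℝ (Fin N) → ℝ) (x : EuclideanSpace ℝ (Fin N))
    (hf : DifferentiableAt ℝ f x) (hg : DifferentiableAt ℝ g x)
    (hpos : 0 < f x ^ 2 + g x ^ 2) :
    DifferentiableAt ℝ (fun y => Real.sqrt ((f y ^ 2 + g y ^ 2) / 2)) x ∧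
      ‖gradient (fun y => Real.sqrt ((f y ^ 2 + g y ^ 2) / 2)) x‖ ^ 2 ≤
        (1 / 2) * (‖gradient f x‖ ^ 2 + ‖gradient g x‖ ^ 2) :=
  gradient_sqrt_mean_square_le_general N f g x hf hg hpos
end

section
/- Let N ≥ 1 and 0 < r₀ < 1. Let f : ℝ^N → ℝ be integrable, vanish outside B, satisfy f ≥ 0 a.e. on {‖x‖ < r₀} and f ≤ 0 a.e. on {r₀ ≤ ‖x‖ < 1}, and suppose the set {x : ‖x‖ < r₀ and f(x) > 0} has positive Lebesgue measure. Let H : ℝ → ℝ be strictly decreasing and positive on [0, 1), set h(x) := H(‖x‖), and assume f·h is integrable on B with ∫_B f·h dx = 0. Then ∫_B f dx < 0. -/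
open MeasureTheory

/-- Comparison step: if `f` vanishes outside the unit ball `B`, is nonnegative a.e. on
`{‖x‖ < r₀}`, nonpositive a.e. on `{r₀ ≤ ‖x‖ < 1}`, positive on a set of positive
measure inside `{‖x‖ < r₀}`, and is orthogonal to a positive radially strictly
decreasing weight `h`, then `∫_B f < 0`. -/
theorem integral_neg_of_orthogonal_radial_weight (N : ℕ) (hN : 1 ≤ N) (r₀ : ℝ)
    (hr₀0 : 0 < r₀) (hr₀1 : r₀ < 1)
    (f : EuclideanSpace ℝ (Fin N) → ℝ) (hf : Integrable f)
    (hvanish : ∀ x : EuclideanSpace ℝ (Fin N), 1 ≤ ‖x‖ → f x = 0)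
    (hpos : ∀ᵐ x : EuclideanSpace ℝ (Fin N), ‖x‖ < r₀ → 0 ≤ f x)
    (hneg : ∀ᵐ x : EuclideanSpace ℝ (Fin N), r₀ ≤ ‖x‖ → ‖x‖ < 1 → f x ≤ 0)
    (hmeas : 0 < volume {x : EuclideanSpace ℝ (Fin N) | ‖x‖ < r₀ ∧ 0 < f x})
    (H : ℝ → ℝ) (hH : StrictAntiOn H (Set.Ico 0 1))
    (hHpos : ∀ t ∈ Set.Ico (0 : ℝ) 1, 0 < H t)
    (hint : IntegrableOn (fun x => f x * H ‖x‖)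
      (Metric.ball (0 : EuclideanSpace ℝ (Fin N)) 1))
    (horth : ∫ x in Metric.ball (0 : EuclideanSpace ℝ (Fin N)) 1, f x * H ‖x‖ = 0) :
    ∫ x in Metric.ball (0 : EuclideanSpace ℝ (Fin N)) 1, f x < 0 := by
  set B := Metric.ball (0 : EuclideanSpace ℝ (Fin N)) 1 with hB
  have hHr₀ : 0 < H r₀ := hHpos r₀ ⟨hr₀0.le, hr₀1⟩
  set g : EuclideanSpace ℝ (Fin N) → ℝ := fun x => f x * H ‖x‖ - H r₀ * f x with hg
  have hfint : IntegrableOn f B := hf.integrableOn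
  have hgint : IntegrableOn g B := hint.sub (hfint.const_mul (H r₀))
  have hgval : ∫ x in B, g x = - (H r₀ * ∫ x in B, f x) := by
    rw [hg]
    rw [integral_sub hint (hfint.const_mul (H r₀)), horth, MeasureTheory.integral_const_mul]
    ring
  have hgnonneg : 0 ≤ᵐ[volume.restrict B] g := by
    have : ∀ᵐ x ∂volume.restrict B, 0 ≤ g x := by
      rw [hB, ae_restrict_iff' measurableSet_ball]
      filter_upwards [hpos, hneg] with x h1 h2 hx
      have hx1 : ‖x‖ < 1 := by simpa [B, dist_eq_norm] using hx
      rcases lt_or_ge ‖x‖ r₀ with hlt | hle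
      · have hf0 : 0 ≤ f x := h1 hlt
        have hHle : H r₀ ≤ H ‖x‖ :=
          (hH ⟨norm_nonneg x, hx1⟩ ⟨hr₀0.le, hr₀1⟩ hlt).le
        have := mul_nonneg hf0 (sub_nonneg.mpr hHle)
        simp only [hg]; nlinarith
      · have hf0 : f x ≤ 0 := h2 hle hx1
        have hHle : H ‖x‖ ≤ H r₀ :=
          hH.antitoneOn ⟨hr₀0.le, hr₀1⟩ ⟨norm_nonneg x, hx1⟩ hle
        have := mul_nonneg (neg_nonneg.mpr hf0) (neg_nonneg.mpr (sub_nonpos.mpr hHle))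
        simp only [hg]; nlinarith
    exact this
  have hsub : {x : EuclideanSpace ℝ (Fin N) | ‖x‖ < r₀ ∧ 0 < f x} ⊆
      Function.support g ∩ B := by
    rintro x ⟨hxr, hfx⟩
    have hx1 : ‖x‖ < 1 := hxr.trans hr₀1
    constructor
    · have hHlt : H r₀ < H ‖x‖ := hH ⟨norm_nonneg x, hx1⟩ ⟨hr₀0.le, hr₀1⟩ hxr
      have : 0 < g x := by simp only [hg]; nlinarith
      exact ne_of_gt this
    · simpa [B, dist_eq_norm] using hx1
  have hpos' : 0 < ∫ x in B, g x := by
    rw [MeasureTheory.setIntegral_pos_iff_support_of_nonneg_ae hgnonneg hgint]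
    exact lt_of_lt_of_le hmeas (measure_mono hsub)
  rw [hgval] at hpos'
  nlinarith
end

section
/- Let N ≥ 1 and 0 < r₀ < 1. Let f : ℝ^N → ℝ be integrable, vanish outside B, satisfy f ≥ 0 a.e. on {‖x‖ < r₀} and f ≤ 0 a.e. on {r₀ ≤ ‖x‖ < 1}, and suppose the set {x : r₀ < ‖x‖ < 1 and f(x) < 0} has positive Lebesgue measure. Let H : ℝ → ℝ be strictly decreasing and positive on [0, 1) and G : ℝ → ℝ be strictly increasing and positive on [0, 1); set h(x) := H(‖x‖) and g(x) := G(‖x‖), and assume f·h and f·g are integrable on B with ∫_B f·h dx = 0. Then ∫_B f·g dx < 0. -/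
/-!
Take `c := G r₀ / H r₀`. The radial profile `φ := c * H - G` is strictly decreasing on `[0, 1)`
and vanishes at `r₀`, so `f · φ(‖x‖)` is a.e. nonnegative on the ball (both factors change sign
at `r₀`) and strictly positive where `r₀ < ‖x‖` and `f x < 0`. Its integral is therefore
positive, and by the orthogonality `∫ f · H(‖x‖) = 0` it equals `-∫ f · G(‖x‖)`.
-/

open MeasureTheory

lemma StrictAntiOn.const_mul_sub {I : Set ℝ} {H G : ℝ → ℝ} (hH : StrictAntiOn H I)
    (hG : StrictMonoOn G I) {c : ℝ} (hc : 0 ≤ c) : StrictAntiOn (fun t => c * H t - G t) I :=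
  fun _ ha _ hb hab => by
    linarith [mul_le_mul_of_nonneg_left (hH ha hb hab).le hc, hG ha hb hab]

section SignChange

variable {I : Set ℝ} {φ : ℝ → ℝ} {r₀ t y : ℝ}

lemma mul_nonneg_of_antitoneOn_of_sign_change (hφ : AntitoneOn φ I) (hr₀ : r₀ ∈ I)
    (hφr₀ : φ r₀ = 0) (ht : t ∈ I) (hlt : t < r₀ → 0 ≤ y) (hge : r₀ ≤ t → y ≤ 0) : 0 ≤ y * φ t := by
  rcases lt_or_ge t r₀ with h | h
  · exact mul_nonneg (hlt h) (hφr₀ ▸ hφ ht hr₀ h.le)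
  · exact mul_nonneg_of_nonpos_of_nonpos (hge h) (hφr₀ ▸ hφ hr₀ ht h)

lemma mul_pos_of_strictAntiOn_of_lt (hφ : StrictAntiOn φ I) (hr₀ : r₀ ∈ I) (hφr₀ : φ r₀ = 0)
    (ht : t ∈ I) (hlt : r₀ < t) (hy : y < 0) : 0 < y * φ t :=
  mul_pos_of_neg_of_neg hy (hφr₀ ▸ hφ hr₀ ht hlt)

variable {α : Type*} [MeasurableSpace α] {μ : Measure α} {s : Set α} {f ρ : α → ℝ}

theorem setIntegral_mul_comp_pos (hs : MeasurableSet s) (hφ : StrictAntiOn φ I)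
    (hr₀ : r₀ ∈ I) (hφr₀ : φ r₀ = 0) (hρ : ∀ x ∈ s, ρ x ∈ I)
    (hpos : ∀ᵐ x ∂μ, x ∈ s → ρ x < r₀ → 0 ≤ f x)
    (hneg : ∀ᵐ x ∂μ, x ∈ s → r₀ ≤ ρ x → f x ≤ 0)
    (hmeas : 0 < μ {x | x ∈ s ∧ r₀ < ρ x ∧ f x < 0})
    (hint : IntegrableOn (fun x => f x * φ (ρ x)) s μ) :
    0 < ∫ x in s, f x * φ (ρ x) ∂μ := by
  have hnonneg : 0 ≤ᵐ[μ.restrict s] fun x => f x * φ (ρ x) := by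
    filter_upwards [ae_restrict_of_ae hpos, ae_restrict_of_ae hneg, ae_restrict_mem hs]
      with x hxp hxn hxs
    exact mul_nonneg_of_antitoneOn_of_sign_change hφ.antitoneOn hr₀ hφr₀ (hρ x hxs)
      (hxp hxs) (hxn hxs)
  refine (setIntegral_pos_iff_support_of_nonneg_ae hnonneg hint).2 (hmeas.trans_le ?_)
  refine measure_mono fun x ⟨hxs, hlt, hfx⟩ => ⟨?_, hxs⟩
  exact (mul_pos_of_strictAntiOn_of_lt hφ hr₀ hφr₀ (hρ x hxs) hlt hfx).ne'

end SignChange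

theorem integral_mul_increasing_neg_general (N : ℕ) (r₀ : ℝ)
    (hr₀0 : 0 < r₀) (hr₀1 : r₀ < 1)
    (f : EuclideanSpace ℝ (Fin N) → ℝ)
    (hpos : ∀ᵐ x : EuclideanSpace ℝ (Fin N), ‖x‖ < r₀ → 0 ≤ f x)
    (hneg : ∀ᵐ x : EuclideanSpace ℝ (Fin N), r₀ ≤ ‖x‖ → ‖x‖ < 1 → f x ≤ 0)
    (hmeas : 0 < volume {x : EuclideanSpace ℝ (Fin N) |
      r₀ < ‖x‖ ∧ ‖x‖ < 1 ∧ f x < 0})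
    (H : ℝ → ℝ) (hH : StrictAntiOn H (Set.Ico 0 1))
    (hHpos : ∀ t ∈ Set.Ico (0 : ℝ) 1, 0 < H t)
    (G : ℝ → ℝ) (hG : StrictMonoOn G (Set.Ico 0 1))
    (hGpos : ∀ t ∈ Set.Ico (0 : ℝ) 1, 0 < G t)
    (hintH : IntegrableOn (fun x => f x * H ‖x‖)
      (Metric.ball (0 : EuclideanSpace ℝ (Fin N)) 1))
    (hintG : IntegrableOn (fun x => f x * G ‖x‖)
      (Metric.ball (0 : EuclideanSpace ℝ (Fin N)) 1))
    (horth : ∫ x in Metric.ball (0 : EuclideanSpace ℝ (Fin N)) 1, f x * H ‖x‖ = 0) :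
    ∫ x in Metric.ball (0 : EuclideanSpace ℝ (Fin N)) 1, f x * G ‖x‖ < 0 := by
  have hr₀ : r₀ ∈ Set.Ico (0 : ℝ) 1 := ⟨hr₀0.le, hr₀1⟩
  set c := G r₀ / H r₀
  have hc : 0 ≤ c := div_nonneg (hGpos r₀ hr₀).le (hHpos r₀ hr₀).le
  have hφr₀ : c * H r₀ - G r₀ = 0 := by rw [div_mul_cancel₀ _ (hHpos r₀ hr₀).ne', sub_self]
  have hprofile : ∀ x : EuclideanSpace ℝ (Fin N),
      f x * (c * H ‖x‖ - G ‖x‖) = c * (f x * H ‖x‖) - f x * G ‖x‖ := fun x => by ring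
  have hsplit : ∫ x in Metric.ball 0 1, f x * (c * H ‖x‖ - G ‖x‖)
      = c * (∫ x in Metric.ball 0 1, f x * H ‖x‖) - ∫ x in Metric.ball 0 1, f x * G ‖x‖ := by
    simp only [hprofile]
    rw [integral_sub (hintH.const_mul c) hintG, integral_const_mul]
  have hpositive := setIntegral_mul_comp_pos (μ := volume) measurableSet_ball
    (hH.const_mul_sub hG hc) hr₀ hφr₀ (ρ := norm)
    (fun x hx => ⟨norm_nonneg x, mem_ball_zero_iff.1 hx⟩)
    (hpos.mono fun x hx _ => hx) (hneg.mono fun x hx hxB hr => hx hr (mem_ball_zero_iff.1 hxB))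
    (by simpa only [mem_ball_zero_iff, and_left_comm] using hmeas)
    (by simp only [hprofile]; exact (hintH.const_mul c).sub hintG)
  rw [hsplit, horth, mul_zero, zero_sub] at hpositive
  linarith

/-- Comparison lemma: if `f` vanishes outside the unit ball `B`, is nonnegative a.e. on
`{‖x‖ < r₀}`, nonpositive a.e. on `{r₀ ≤ ‖x‖ < 1}`, strictly negative on a set of
positive measure inside `{r₀ < ‖x‖ < 1}`, and is orthogonal to a positive radially
strictly decreasing weight `h`, then `∫_B f·g < 0` for every positive radially
strictly increasing weight `g`. -/
theorem integral_mul_increasing_neg (N : ℕ) (hN : 1 ≤ N) (r₀ : ℝ)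
    (hr₀0 : 0 < r₀) (hr₀1 : r₀ < 1)
    (f : EuclideanSpace ℝ (Fin N) → ℝ) (hf : Integrable f)
    (hvanish : ∀ x : EuclideanSpace ℝ (Fin N), 1 ≤ ‖x‖ → f x = 0)
    (hpos : ∀ᵐ x : EuclideanSpace ℝ (Fin N), ‖x‖ < r₀ → 0 ≤ f x)
    (hneg : ∀ᵐ x : EuclideanSpace ℝ (Fin N), r₀ ≤ ‖x‖ → ‖x‖ < 1 → f x ≤ 0)
    (hmeas : 0 < volume {x : EuclideanSpace ℝ (Fin N) |
      r₀ < ‖x‖ ∧ ‖x‖ < 1 ∧ f x < 0})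
    (H : ℝ → ℝ) (hH : StrictAntiOn H (Set.Ico 0 1))
    (hHpos : ∀ t ∈ Set.Ico (0 : ℝ) 1, 0 < H t)
    (G : ℝ → ℝ) (hG : StrictMonoOn G (Set.Ico 0 1))
    (hGpos : ∀ t ∈ Set.Ico (0 : ℝ) 1, 0 < G t)
    (hintH : IntegrableOn (fun x => f x * H ‖x‖)
      (Metric.ball (0 : EuclideanSpace ℝ (Fin N)) 1))
    (hintG : IntegrableOn (fun x => f x * G ‖x‖)
      (Metric.ball (0 : EuclideanSpace ℝ (Fin N)) 1))
    (horth : ∫ x in Metric.ball (0 : EuclideanSpace ℝ (Fin N)) 1, f x * H ‖x‖ = 0) :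
    ∫ x in Metric.ball (0 : EuclideanSpace ℝ (Fin N)) 1, f x * G ‖x‖ < 0 :=
  integral_mul_increasing_neg_general N r₀ hr₀0 hr₀1 f hpos hneg hmeas H hH hHpos G hG hGpos hintH
    hintG horth
end

section
/- Let N ≥ 1, let f, v : ℝ^N → ℝ be differentiable at a point x with v(x) ≠ 0. Then the function y ↦ f(y)²/v(y) is differentiable at x and ⟨∇(f²/v)(x), ∇v(x)⟩ ≤ ‖∇f(x)‖², where ∇ denotes the gradient and ⟨·,·⟩ the Euclidean inner product. -/
/-!
Writing `c = f x / v x`, the quotient rule gives `∇(f²/v)(x) = 2c ∇f(x) - c² ∇v(x)`, so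
`‖∇f(x)‖² - ⟪∇(f²/v)(x), ∇v(x)⟫ = ‖∇f(x) - c ∇v(x)‖² ≥ 0`.
-/

open RealInnerProductSpace

variable {E : Type*} [NormedAddCommGroup E] [InnerProductSpace ℝ E]

theorem real_inner_two_mul_smul_sub_sq_smul_le_norm_sq (a b : E) (c : ℝ) :
    ⟪(2 * c) • a - c ^ 2 • b, b⟫ ≤ ‖a‖ ^ 2 := by
  have h := sq_nonneg ‖a - c • b‖
  rw [norm_sub_sq_real, real_inner_smul_right, norm_smul, mul_pow, Real.norm_eq_abs,
    sq_abs] at h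
  rw [inner_sub_left, real_inner_smul_left, real_inner_smul_left, real_inner_self_eq_norm_sq]
  linarith

theorem HasFDerivAt.sq_div {f v : E → ℝ} {f' v' : E →L[ℝ] ℝ} {x : E}
    (hf : HasFDerivAt f f' x) (hv : HasFDerivAt v v' x) (hvx : v x ≠ 0) :
    HasFDerivAt (fun y => f y ^ 2 / v y) ((2 * (f x / v x)) • f' - (f x / v x) ^ 2 • v') x := by
  simp only [div_eq_mul_inv]
  refine ((hf.pow 2).mul ((hasFDerivAt_inv hvx).comp x hv)).congr_fderiv ?_
  ext y
  simp only [Function.comp_apply, Nat.add_one_sub_one, pow_one, nsmul_eq_mul, Nat.cast_ofNat,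
    add_apply, sub_apply, smul_apply, ContinuousLinearMap.comp_apply,
    ContinuousLinearMap.toSpanSingleton_apply, smul_eq_mul, mul_neg]
  field_simp
  ring

theorem HasGradientAt.sq_div [CompleteSpace E] {f v : E → ℝ} {f' v' x : E}
    (hf : HasGradientAt f f' x) (hv : HasGradientAt v v' x) (hvx : v x ≠ 0) :
    HasGradientAt (fun y => f y ^ 2 / v y) ((2 * (f x / v x)) • f' - (f x / v x) ^ 2 • v') x := by
  rw [hasGradientAt_iff_hasFDerivAt, map_sub, map_smul, map_smul]
  exact hf.hasFDerivAt.sq_div hv.hasFDerivAt hvx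

theorem local_picone_inequality_general (N : ℕ)
    (f v : EuclideanSpace ℝ (Fin N) → ℝ) (x : EuclideanSpace ℝ (Fin N))
    (hf : DifferentiableAt ℝ f x) (hv : DifferentiableAt ℝ v x) (hvx : v x ≠ 0) :
    DifferentiableAt ℝ (fun y => f y ^ 2 / v y) x ∧
      ⟪gradient (fun y => f y ^ 2 / v y) x, gradient v x⟫ ≤ ‖gradient f x‖ ^ 2 := by
  have h := hf.hasGradientAt.sq_div hv.hasGradientAt hvx
  exact ⟨h.differentiableAt, h.gradient ▸ real_inner_two_mul_smul_sub_sq_smul_le_norm_sq _ _ _⟩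

/-- Pointwise local Picone inequality: if `f, v : ℝ^N → ℝ` are differentiable at `x`
with `v(x) ≠ 0`, then `y ↦ f(y)²/v(y)` is differentiable at `x` and
`⟨∇(f²/v)(x), ∇v(x)⟩ ≤ ‖∇f(x)‖²`. -/
theorem local_picone_inequality (N : ℕ) (hN : 1 ≤ N)
    (f v : EuclideanSpace ℝ (Fin N) → ℝ) (x : EuclideanSpace ℝ (Fin N))
    (hf : DifferentiableAt ℝ f x) (hv : DifferentiableAt ℝ v x) (hvx : v x ≠ 0) :
    DifferentiableAt ℝ (fun y => f y ^ 2 / v y) x ∧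
      ⟪gradient (fun y => f y ^ 2 / v y) x, gradient v x⟫ ≤ ‖gradient f x‖ ^ 2 :=
  local_picone_inequality_general N f v x hf hv hvx
end
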